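/- In the setting of the spin-(T/2) representation on ℂ^{T+1}, define σ_ℓ for 1 ≤ ℓ ≤ T by σ_ℓ|t⟩ = (−1)^{𝟙(t ≥ ℓ)}|t⟩, and let |v_k⟩ = e^{iπL_y/2}|k⟩. Then for any 0 ≤ k < T, max_{1 ≤ ℓ ≤ T} |⟨v_k| σ_ℓ |v_{k+1}⟩| ≥ 1/√T. -/

import Mathlib

/-
The operators `σ_ℓ` sum to `-2 L_z`, so the `T` matrix elements `⟨v_k|σ_ℓ|v_{k+1}⟩` add up to
`-2 ⟨k| e^{-iπL_y/2} L_z e^{iπL_y/2} |k+1⟩ = -2 ⟨k|L_x|k+1⟩ = -√((k+1)(T-k))`, whose modulus is at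
least `√T`; hence one of them has modulus at least `1/√T`. The rotation
`e^{-iθL_y} L_z e^{iθL_y} = cos θ L_z + sin θ L_x` holds in any Banach algebra once
`[L_y, L_z] = i L_x` and `[L_y, L_x] = -i L_z`, because `L_z ± i L_x` are then eigenvectors of
`ad L_y` with eigenvalues `±1`.
-/

open Matrix

/-- The spin-(T/2) raising operator on `ℂ^{T+1}`: `L₊|t⟩ = √((t+1)(T-t)) |t+1⟩`. -/
noncomputable def Lplus (T : ℕ) : Matrix (Fin (T + 1)) (Fin (T + 1)) ℂ :=
  Matrix.of fun i j =>
    if (i : ℕ) = (j : ℕ) + 1 then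
      (Real.sqrt (((j : ℕ) + 1) * ((T : ℝ) - (j : ℕ))) : ℂ)
    else 0

/-- `L_y = (L₊ - L₋)/(2i)` with `L₋ = L₊†`. -/
noncomputable def Ly (T : ℕ) : Matrix (Fin (T + 1)) (Fin (T + 1)) ℂ :=
  (2 * Complex.I)⁻¹ • (Lplus T - (Lplus T)ᴴ)

/-- The rotated basis state `|v_k⟩ = e^{iπ L_y/2} |k⟩`. -/
noncomputable def vRot (T : ℕ) (k : Fin (T + 1)) : Fin (T + 1) → ℂ :=
  (NormedSpace.exp ((Complex.I * (Real.pi / 2 : ℝ)) • Ly T)) *ᵥ Pi.single k 1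

/-- The diagonal sign operator `σ_ℓ |t⟩ = (-1)^{𝟙(t ≥ ℓ)} |t⟩`. -/
noncomputable def sigmaFlip (T ℓ : ℕ) : Matrix (Fin (T + 1)) (Fin (T + 1)) ℂ :=
  Matrix.diagonal fun t => if ℓ ≤ (t : ℕ) then (-1 : ℂ) else 1

open Complex (I)

section BanachAlgebra

variable {𝔸 : Type*} [NormedRing 𝔸] [NormedAlgebra ℚ 𝔸] [NormedAlgebra ℂ 𝔸] [CompleteSpace 𝔸]

theorem exp_neg_smul_mul_mul_exp_smul_of_commutator_eq_smul {L N : 𝔸} {c : ℂ}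
    (h : L * N - N * L = c • N) (z : ℂ) :
    NormedSpace.exp (-(z • L)) * N * NormedSpace.exp (z • L) = Complex.exp (-(z * c)) • N := by
  have hsemi : SemiconjBy N (z • L) (z • L + algebraMap ℂ 𝔸 (-(z * c))) := by
    rw [SemiconjBy, add_mul, Algebra.algebraMap_eq_smul_one, smul_one_mul, smul_mul_assoc,
      mul_smul_comm, eq_add_of_sub_eq' h]
    module
  have hexp :
      N * NormedSpace.exp (z • L) = Complex.exp (-(z * c)) • (NormedSpace.exp (z • L) * N) := by
    rw [hsemi.exp_right.eq, NormedSpace.exp_add_of_commute (Algebra.commutes _ _).symm,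
      ← NormedSpace.algebraMap_exp_comm, ← Complex.exp_eq_exp_ℂ, ← Algebra.commutes, mul_assoc,
      ← Algebra.smul_def]
  rw [mul_assoc, hexp, mul_smul_comm, ← mul_assoc,
    ← NormedSpace.exp_add_of_commute (Commute.refl _).neg_left, neg_add_cancel,
    NormedSpace.exp_zero, one_mul]

theorem exp_neg_smul_mul_mul_exp_smul_eq_cos_add_sin {L X Z : 𝔸}
    (hZ : L * Z - Z * L = I • X) (hX : L * X - X * L = -I • Z) (θ : ℂ) :
    NormedSpace.exp (-((I * θ) • L)) * Z * NormedSpace.exp ((I * θ) • L)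
      = Complex.cos θ • Z + Complex.sin θ • X := by
  have hplus : L * (Z + I • X) - (Z + I • X) * L = (1 : ℂ) • (Z + I • X) := by
    rw [mul_add, add_mul, mul_smul_comm, smul_mul_assoc]
    linear_combination (norm := match_scalars <;> simp) hZ + I • hX
  have hminus : L * (Z - I • X) - (Z - I • X) * L = (-1 : ℂ) • (Z - I • X) := by
    rw [mul_sub, sub_mul, mul_smul_comm, smul_mul_assoc]
    linear_combination (norm := match_scalars <;> simp) hZ - I • hX
  have hsplit : Z = (2 : ℂ)⁻¹ • ((Z + I • X) + (Z - I • X)) := by module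
  conv_lhs => rw [hsplit]
  rw [mul_smul_comm, smul_mul_assoc, mul_add, add_mul,
    exp_neg_smul_mul_mul_exp_smul_of_commutator_eq_smul hplus,
    exp_neg_smul_mul_mul_exp_smul_of_commutator_eq_smul hminus, Complex.cos, Complex.sin]
  match_scalars <;> ring_nf

end BanachAlgebra

theorem Matrix.exp_neg_smul_mul_mul_exp_smul_eq_cos_add_sin {n : Type*} [Fintype n]
    [DecidableEq n] {L X Z : Matrix n n ℂ} (hZ : L * Z - Z * L = I • X)
    (hX : L * X - X * L = -I • Z) (θ : ℂ) :
    NormedSpace.exp (-((I * θ) • L)) * Z * NormedSpace.exp ((I * θ) • L)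
      = Complex.cos θ • Z + Complex.sin θ • X :=
  open scoped Norms.Operator in _root_.exp_neg_smul_mul_mul_exp_smul_eq_cos_add_sin hZ hX θ

theorem Matrix.IsHermitian.conjTranspose_exp_I_mul_smul {n : Type*} [Fintype n] [DecidableEq n]
    {H : Matrix n n ℂ} (hH : H.IsHermitian) (θ : ℝ) :
    (NormedSpace.exp ((I * θ) • H))ᴴ = NormedSpace.exp (-((I * θ) • H)) := by
  rw [← exp_conjTranspose, conjTranspose_smul, hH.eq, ← neg_smul]
  simp

theorem star_mulVec_single_dotProduct_mulVec_mulVec_single {n R : Type*} [Fintype n]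
    [DecidableEq n] [CommSemiring R] [StarRing R] (A X : Matrix n n R) (i j : n) :
    star (A *ᵥ Pi.single i 1) ⬝ᵥ (X *ᵥ (A *ᵥ Pi.single j 1)) = (Aᴴ * X * A) i j := by
  rw [star_mulVec, ← dotProduct_mulVec, mulVec_mulVec, mulVec_mulVec, Pi.star_single, star_one,
    single_one_dotProduct, mulVec_single_one, col_apply]

theorem Fin.sum_ite_val_eq_add_one {M : Type*} [AddCommMonoid M] {n : ℕ} (i : Fin (n + 1))
    (f : Fin (n + 1) → M) :
    ∑ k : Fin (n + 1), (if (i : ℕ) = k + 1 then f k else 0)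
      = if h : (i : ℕ) = 0 then 0 else f ⟨i - 1, by omega⟩ := by
  split_ifs with h
  · exact Finset.sum_eq_zero fun k _ => if_neg (by omega)
  · rw [Fintype.sum_eq_single ⟨i - 1, by omega⟩
      fun k hk => if_neg fun _ => hk (Fin.ext (by simp only; omega)), if_pos (by simp only; omega)]

theorem Fin.sum_ite_val_eq {M : Type*} [AddCommMonoid M] {n : ℕ} (m : ℕ) (c : M) :
    ∑ k : Fin (n + 1), (if (k : ℕ) = m then c else 0) = if m ≤ n then c else 0 := by
  rw [Fin.sum_univ_eq_sum_range (fun k => if k = m then c else 0), Finset.sum_ite_eq']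
  simp only [Finset.mem_range, Nat.lt_succ_iff]

theorem sum_Icc_ite_le_neg_one_one {R : Type*} [Ring R] {n t : ℕ} (ht : t ≤ n) :
    ∑ ℓ ∈ Finset.Icc 1 n, (if ℓ ≤ t then (-1 : R) else 1) = n - 2 * t := by
  change ∑ ℓ ∈ Finset.Ioc 0 n, _ = _
  rw [← Finset.sum_Ioc_consecutive _ (Nat.zero_le t) ht,
    Finset.sum_congr rfl fun ℓ hℓ => if_pos (Finset.mem_Ioc.1 hℓ).2,
    Finset.sum_congr rfl fun ℓ hℓ => if_neg (Finset.mem_Ioc.1 hℓ).1.not_ge]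
  simp only [Finset.sum_const, Nat.card_Ioc, nsmul_eq_mul, Nat.cast_sub ht, Nat.sub_zero]
  noncomm_ring

noncomputable def Lz (T : ℕ) : Matrix (Fin (T + 1)) (Fin (T + 1)) ℂ :=
  diagonal fun t => ((t : ℕ) : ℂ) - T / 2

noncomputable def Lx (T : ℕ) : Matrix (Fin (T + 1)) (Fin (T + 1)) ℂ :=
  (2 : ℂ)⁻¹ • (Lplus T + (Lplus T)ᴴ)

noncomputable def rotY (T : ℕ) : Matrix (Fin (T + 1)) (Fin (T + 1)) ℂ :=
  NormedSpace.exp ((I * (Real.pi / 2 : ℝ)) • Ly T)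

theorem conjTranspose_Lplus (T : ℕ) : (Lplus T)ᴴ = (Lplus T)ᵀ := by
  ext i j
  simp [Lplus, apply_ite (star : ℂ → ℂ)]

theorem ofReal_sqrt_succ_mul_sub_mul_self {T j : ℕ} (hj : j ≤ T) :
    ((Real.sqrt ((j + 1) * ((T : ℝ) - j)) : ℂ)) * (Real.sqrt ((j + 1) * ((T : ℝ) - j)) : ℂ)
      = (j + 1) * ((T : ℂ) - j) := by
  have : (j : ℝ) ≤ T := by exact_mod_cast hj
  rw [← Complex.ofReal_mul, Real.mul_self_sqrt (mul_nonneg (by positivity) (by linarith))]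
  push_cast
  ring

theorem Lplus_mul_conjTranspose_Lplus (T : ℕ) :
    Lplus T * (Lplus T)ᴴ = diagonal fun i : Fin (T + 1) => ((i : ℕ) : ℂ) * (T + 1 - (i : ℕ)) := by
  ext i j
  rw [conjTranspose_Lplus, mul_apply, diagonal_apply]
  simp only [transpose_apply, Lplus, of_apply, ite_mul, zero_mul, mul_ite, mul_zero, ← ite_and]
  split_ifs with hij
  · subst hij
    simp only [and_self, Fin.sum_ite_val_eq_add_one]
    split_ifs with hi
    · simp [hi]
    · rw [ofReal_sqrt_succ_mul_sub_mul_self (by omega), Nat.cast_sub (by omega)]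
      push_cast
      ring
  · exact Finset.sum_eq_zero fun k _ => if_neg fun h => hij (Fin.ext (by omega))

theorem conjTranspose_Lplus_mul_Lplus (T : ℕ) :
    (Lplus T)ᴴ * Lplus T = diagonal fun i : Fin (T + 1) => ((i : ℕ) + 1 : ℂ) * (T - (i : ℕ)) := by
  ext i j
  rw [conjTranspose_Lplus, mul_apply, diagonal_apply]
  simp only [transpose_apply, Lplus, of_apply, ite_mul, zero_mul, mul_ite, mul_zero, ← ite_and]
  split_ifs with hij
  · subst hij
    simp only [and_self, Fin.sum_ite_val_eq]
    split_ifs with hi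
    · exact ofReal_sqrt_succ_mul_sub_mul_self (by omega)
    · have : (i : ℕ) = T := by omega
      simp [this]
  · exact Finset.sum_eq_zero fun k _ => if_neg fun h => hij (Fin.ext (by omega))

theorem Lz_mul_Lplus_sub (T : ℕ) : Lz T * Lplus T - Lplus T * Lz T = Lplus T := by
  ext i j
  rw [Matrix.sub_apply, Lz, diagonal_mul, mul_diagonal, Lplus, of_apply]
  split_ifs with h
  · rw [h]
    push_cast
    ring
  · ring

theorem isHermitian_Lz (T : ℕ) : (Lz T).IsHermitian := by
  refine isHermitian_diagonal_of_self_adjoint _ (funext fun t => ?_)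
  simp

theorem Lz_mul_conjTranspose_Lplus_sub (T : ℕ) :
    Lz T * (Lplus T)ᴴ - (Lplus T)ᴴ * Lz T = -(Lplus T)ᴴ := by
  have h := congrArg conjTranspose (Lz_mul_Lplus_sub T)
  rw [conjTranspose_sub, conjTranspose_mul, conjTranspose_mul, (isHermitian_Lz T).eq] at h
  rw [← neg_sub, h]

theorem Lplus_mul_conjTranspose_Lplus_sub (T : ℕ) :
    Lplus T * (Lplus T)ᴴ - (Lplus T)ᴴ * Lplus T = (2 : ℂ) • Lz T := by
  rw [Lplus_mul_conjTranspose_Lplus, conjTranspose_Lplus_mul_Lplus, diagonal_sub, Lz,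
    ← diagonal_smul]
  congr 1
  funext t
  simp only [Pi.smul_apply, smul_eq_mul]
  ring

theorem Ly_mul_Lz_sub (T : ℕ) : Ly T * Lz T - Lz T * Ly T = I • Lx T := by
  have hP := Lz_mul_Lplus_sub T
  have hM := Lz_mul_conjTranspose_Lplus_sub T
  simp only [Ly, Lx, smul_mul_assoc, mul_smul_comm, sub_mul, mul_sub]
  linear_combination (norm := match_scalars <;> simp) (-(2 * I)⁻¹) • hP + (2 * I)⁻¹ • hM

theorem Ly_mul_Lx_sub (T : ℕ) : Ly T * Lx T - Lx T * Ly T = -I • Lz T := by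
  have h := Lplus_mul_conjTranspose_Lplus_sub T
  simp only [Ly, Lx, smul_mul_assoc, mul_smul_comm, sub_mul, mul_sub, add_mul, mul_add]
  linear_combination (norm := match_scalars <;> simp <;> ring) (2 * I)⁻¹ • h

theorem isHermitian_Ly (T : ℕ) : (Ly T).IsHermitian := by
  rw [IsHermitian, Ly, conjTranspose_smul, conjTranspose_sub, conjTranspose_conjTranspose,
    ← neg_sub, smul_neg, ← neg_smul]
  congr 1
  simp

theorem rotY_conjTranspose_mul_Lz_mul_rotY (T : ℕ) : (rotY T)ᴴ * Lz T * rotY T = Lx T := by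
  rw [rotY, (isHermitian_Ly T).conjTranspose_exp_I_mul_smul,
    Matrix.exp_neg_smul_mul_mul_exp_smul_eq_cos_add_sin (Ly_mul_Lz_sub T) (Ly_mul_Lx_sub T),
    ← Complex.ofReal_cos, ← Complex.ofReal_sin, Real.cos_pi_div_two, Real.sin_pi_div_two]
  simp

theorem Lx_apply_of_val_eq_add_one {T : ℕ} {i j : Fin (T + 1)} (h : (j : ℕ) = i + 1) :
    Lx T i j = (Real.sqrt (((i : ℕ) + 1) * ((T : ℝ) - (i : ℕ))) : ℂ) / 2 := by
  rw [Lx, Matrix.smul_apply, Matrix.add_apply, conjTranspose_Lplus, transpose_apply, Lplus,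
    of_apply, of_apply, if_neg (by omega), if_pos h, smul_eq_mul, zero_add, inv_mul_eq_div]

theorem vRot_dotProduct_mulVec_vRot (T : ℕ) (X : Matrix (Fin (T + 1)) (Fin (T + 1)) ℂ)
    (i j : Fin (T + 1)) :
    star (vRot T i) ⬝ᵥ (X *ᵥ vRot T j) = ((rotY T)ᴴ * X * rotY T) i j :=
  star_mulVec_single_dotProduct_mulVec_mulVec_single _ _ i j

theorem sum_sigmaFlip (T : ℕ) : ∑ ℓ ∈ Finset.Icc 1 T, sigmaFlip T ℓ = (-2 : ℂ) • Lz T := by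
  ext i j
  rcases eq_or_ne i j with rfl | hij
  · simp only [sigmaFlip, Matrix.sum_apply, diagonal_apply_eq,
      sum_Icc_ite_le_neg_one_one (show (i : ℕ) ≤ T by omega), Lz, Matrix.smul_apply, smul_eq_mul]
    ring
  · simp [Matrix.sum_apply, sigmaFlip, Lz, diagonal_apply_ne _ hij]

theorem sum_vRot_dotProduct_sigmaFlip_mulVec_vRot (T : ℕ) (i j : Fin (T + 1)) :
    ∑ ℓ ∈ Finset.Icc 1 T, star (vRot T i) ⬝ᵥ (sigmaFlip T ℓ *ᵥ vRot T j) = -2 * Lx T i j := by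
  rw [← dotProduct_sum, ← sum_mulVec, sum_sigmaFlip, vRot_dotProduct_mulVec_vRot, mul_smul_comm,
    smul_mul_assoc, Matrix.smul_apply, rotY_conjTranspose_mul_Lz_mul_rotY, smul_eq_mul]

/-- `max_{1 ≤ ℓ ≤ T} |⟨v_k| σ_ℓ |v_{k+1}⟩| ≥ 1/√T` for `0 ≤ k < T`. -/
theorem sigma_matrix_element_lower_bound (T k : ℕ) (hk : k < T) :
    ∃ ℓ : ℕ, 1 ≤ ℓ ∧ ℓ ≤ T ∧
      1 / Real.sqrt T ≤
        ‖star (vRot T ⟨k, by omega⟩) ⬝ᵥ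
          (sigmaFlip T ℓ *ᵥ vRot T ⟨k + 1, by omega⟩)‖ := by
  obtain ⟨ℓ, hℓ, hle⟩ := Finset.exists_le_of_sum_le (Finset.nonempty_Icc.2 (by omega : 1 ≤ T)) <|
    calc ∑ _ℓ ∈ Finset.Icc 1 T, 1 / Real.sqrt T
        = Real.sqrt T := by
          rw [Finset.sum_const, Nat.card_Icc, nsmul_eq_mul, Nat.add_sub_cancel, mul_one_div,
            Real.div_sqrt]
      _ ≤ Real.sqrt ((k + 1) * ((T : ℝ) - k)) := by
          have : (k : ℝ) + 1 ≤ T := by exact_mod_cast hk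
          exact Real.sqrt_le_sqrt (by nlinarith)
      _ = ‖-2 * Lx T ⟨k, by omega⟩ ⟨k + 1, by omega⟩‖ := by
          rw [Lx_apply_of_val_eq_add_one rfl, norm_mul, norm_div, Complex.norm_real,
            Real.norm_of_nonneg (Real.sqrt_nonneg _), norm_neg, Complex.norm_two]
          ring
      _ = ‖∑ ℓ ∈ Finset.Icc 1 T, star (vRot T ⟨k, by omega⟩) ⬝ᵥ
            (sigmaFlip T ℓ *ᵥ vRot T ⟨k + 1, by omega⟩)‖ := by
          rw [sum_vRot_dotProduct_sigmaFlip_mulVec_vRot]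
      _ ≤ _ := norm_sum_le _ _
  exact ⟨ℓ, (Finset.mem_Icc.1 hℓ).1, (Finset.mem_Icc.1 hℓ).2, hle⟩
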